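/- arXiv:1901.03902 — 2 statements merged into one kernel-verified Lean document; each statement's English description precedes it below -/
import Mathlib

section
/- Fix x ∈ ℝ³. Let U ⊆ ℝ³ \ {0} be open and let λ : U → ℝ and q : U → ℝ³ be twice continuously differentiable maps such that for every p ∈ U one has Γ(x,p) · q(p) = λ(p) · q(p) and ⟨q(p), q(p)⟩ = 1 (Euclidean inner product). Then for every p ∈ U the Hessian matrix of λ at p (the 3×3 matrix with entries ∂²λ/∂p_j∂p_k (p)) equals 2 · ( Γ(x, q(p)) + (Dq(p))ᵀ · (λ(p)·I − Γ(x,p)) · Dq(p) ), where Dq(p) is the Jacobian matrix of q at p (with entries (Dq(p))_{ij} = ∂q_i/∂p_j (p)), I is the 3×3 identity matrix, and Γ(x, q(p)) denotes the Christoffel matrix evaluated at the vector q(p) in place of p. -/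
noncomputable section

open Matrix

/-- The Christoffel matrix `Γ(x,p)` with entries `Γ_{il} = Σ_{j,k} a_{ijkl}(x) p_j p_k`. -/
def christoffel (a : (Fin 3 → ℝ) → Fin 3 → Fin 3 → Fin 3 → Fin 3 → ℝ)
    (x p : Fin 3 → ℝ) : Matrix (Fin 3) (Fin 3) ℝ :=
  Matrix.of fun i l => ∑ j : Fin 3, ∑ k : Fin 3, a x i j k l * p j * p k

/-- The set of real eigenvalues of a `3 × 3` real matrix. -/
def eigSet (A : Matrix (Fin 3) (Fin 3) ℝ) : Set ℝ :=
  {μ : ℝ | ∃ v : Fin 3 → ℝ, v ≠ 0 ∧ A.mulVec v = μ • v}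

/-- The largest (real) eigenvalue of a `3 × 3` real matrix. -/
def lamMax (A : Matrix (Fin 3) (Fin 3) ℝ) : ℝ := sSup (eigSet A)

/-- `λ¹(x,p)`: the largest eigenvalue of the Christoffel matrix `Γ(x,p)`. -/
def lam1 (a : (Fin 3 → ℝ) → Fin 3 → Fin 3 → Fin 3 → Fin 3 → ℝ)
    (x p : Fin 3 → ℝ) : ℝ := lamMax (christoffel a x p)

/-- The symmetries `a_{ijkl} = a_{jikl} = a_{klij}` of the stiffness tensor. -/
def StiffSymm (a : (Fin 3 → ℝ) → Fin 3 → Fin 3 → Fin 3 → Fin 3 → ℝ) : Prop :=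
  ∀ (x : Fin 3 → ℝ) (i j k l : Fin 3),
    a x i j k l = a x j i k l ∧ a x i j k l = a x k l i j

/-- The positive-definiteness assumption: `Γ(x,p)` is positive definite for `p ≠ 0`. -/
def ChristoffelPosDef (a : (Fin 3 → ℝ) → Fin 3 → Fin 3 → Fin 3 → Fin 3 → ℝ) : Prop :=
  ∀ (x p : Fin 3 → ℝ), p ≠ 0 → (christoffel a x p).PosDef

/-- The gap condition: for every `p ≠ 0`, `λ¹(x,p)` is an eigenvalue of `Γ(x,p)`, it is a
simple eigenvalue (one-dimensional eigenspace), and every other eigenvalue is strictly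
smaller. -/
def GapCondition (a : (Fin 3 → ℝ) → Fin 3 → Fin 3 → Fin 3 → Fin 3 → ℝ) : Prop :=
  ∀ (x p : Fin 3 → ℝ), p ≠ 0 →
    lam1 a x p ∈ eigSet (christoffel a x p) ∧
    (∀ μ ∈ eigSet (christoffel a x p), μ = lam1 a x p ∨ μ < lam1 a x p) ∧
    Module.finrank ℝ
      (Module.End.eigenspace (Matrix.toLin' (christoffel a x p)) (lam1 a x p)) = 1

/-- Smoothness of the stiffness tensor. -/
def StiffSmooth (a : (Fin 3 → ℝ) → Fin 3 → Fin 3 → Fin 3 → Fin 3 → ℝ) : Prop :=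
  ∀ i j k l : Fin 3, ContDiff ℝ (⊤ : ℕ∞) fun x => a x i j k l

/-!
On `U` the eigenvalue is the Rayleigh quotient `λ = ⟨q, Γ q⟩`. Differentiating, the terms
containing `Dq` vanish because `Γ q = λ q` and `⟨q, Dq⟩ = 0` (from `|q| = 1`), which leaves the
Hellmann–Feynman formula `Dλ[v] = ⟨q, DΓ[v] q⟩`. Differentiating once more and eliminating
`DΓ[v] q` by the differentiated eigen-equation `DΓ[v] q = (λ - Γ) Dq[v] + Dλ[v] q` gives
`D²λ[w, v] = ⟨q, D²Γ[w, v] q⟩ + 2 ⟨Dq[w], (λ - Γ) Dq[v]⟩`. Since `Γ(x, p)` is quadratic in `p`,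
the symmetries of `a` turn `⟨q, D²Γ[e_j, e_k] q⟩` into `2 Γ(x, q)_{jk}`.
-/

open Filter Topology

section Calculus

variable {E F G H : Type*} [NormedAddCommGroup E] [NormedSpace ℝ E]
  [NormedAddCommGroup F] [NormedSpace ℝ F] [NormedAddCommGroup G] [NormedSpace ℝ G]
  [NormedAddCommGroup H] [NormedSpace ℝ H]

theorem fderiv_bilinear_apply (B : F →L[ℝ] G →L[ℝ] H) {f : E → F} {g : E → G} {p : E}
    (hf : DifferentiableAt ℝ f p) (hg : DifferentiableAt ℝ g p) (v : E) :
    fderiv ℝ (fun y => B (f y) (g y)) p v =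
      B (fderiv ℝ f p v) (g p) + B (f p) (fderiv ℝ g p v) := by
  rw [B.fderiv_of_bilinear hf hg]
  simp [add_comm]

theorem fderiv_clm_apply_apply {T : E → F →L[ℝ] G} {f : E → F} {p : E}
    (hT : DifferentiableAt ℝ T p) (hf : DifferentiableAt ℝ f p) (v : E) :
    fderiv ℝ (fun y => T y (f y)) p v = fderiv ℝ T p v (f p) + T p (fderiv ℝ f p v) := by
  rw [fderiv_clm_apply hT hf]
  simp [add_comm]

theorem fderiv_apply_eq_zero_of_eventuallyEq_const {f : E → F} {p : E} {c : F}
    (h : f =ᶠ[𝓝 p] fun _ => c) (v : E) : fderiv ℝ f p v = 0 := by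
  simp [h.fderiv_eq]

theorem fderiv_bilinear_diag_apply (C : E →L[ℝ] E →L[ℝ] F) (y v : E) :
    fderiv ℝ (fun y => C y y) y v = C y v + C v y := by
  simpa [add_comm] using
    fderiv_bilinear_apply C (differentiableAt_id (x := y)) differentiableAt_id v

theorem fderiv_fderiv_bilinear_diag_apply (C : E →L[ℝ] E →L[ℝ] F) (p v w : E) :
    fderiv ℝ (fun y => fderiv ℝ (fun y => C y y) y v) p w = C w v + C v w := by
  simp_rw [fderiv_bilinear_diag_apply]
  rw [fderiv_fun_add (by fun_prop) (by fun_prop), _root_.add_apply,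
    fderiv_clm_apply_apply C.differentiableAt (differentiableAt_const v), C.fderiv]
  simp

end Calculus

section Eigenvalue

variable {E V : Type*} [NormedAddCommGroup E] [NormedSpace ℝ E]
  [NormedAddCommGroup V] [NormedSpace ℝ V] {β : V →L[ℝ] V →L[ℝ] ℝ}

def IsSelfAdjointWrt (β : V →L[ℝ] V →L[ℝ] ℝ) (T : V →L[ℝ] V) : Prop :=
  ∀ u w, β (T u) w = β u (T w)

theorem IsSelfAdjointWrt.fderiv {T : E → V →L[ℝ] V} {p : E} (hT : DifferentiableAt ℝ T p)
    (hsymm : ∀ᶠ y in 𝓝 p, IsSelfAdjointWrt β (T y)) (v : E) :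
    IsSelfAdjointWrt β (fderiv ℝ T p v) := by
  intro u w
  have hTu : ∀ z : V, DifferentiableAt ℝ (fun y => T y z) p := fun z =>
    hT.clm_apply (differentiableAt_const z)
  have h0 := fderiv_apply_eq_zero_of_eventuallyEq_const
    (f := fun y => β (T y u) w - β u (T y w)) (c := 0)
    (hsymm.mono fun y hy => sub_eq_zero.mpr (hy u w)) v
  rw [fderiv_fun_sub (by fun_prop) (by fun_prop), _root_.sub_apply,
    fderiv_bilinear_apply β (hTu u) (differentiableAt_const w),
    fderiv_bilinear_apply β (differentiableAt_const u) (hTu w),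
    fderiv_clm_apply_apply hT (differentiableAt_const u),
    fderiv_clm_apply_apply hT (differentiableAt_const w)] at h0
  simpa [sub_eq_zero] using h0

theorem eq_bilin_of_apply_eq_smul {T : V →L[ℝ] V} {u : V} {μ : ℝ} (hT : T u = μ • u)
    (hu : β u u = 1) : μ = β u (T u) := by
  simp [hT, hu]

variable {Γ : E → V →L[ℝ] V} {q : E → V} {lam : E → ℝ} {p : E}

theorem bilin_fderiv_eq_zero_of_eventually_eq_one (hβ : ∀ u w, β u w = β w u)
    (hq : DifferentiableAt ℝ q p) (hunit : ∀ᶠ y in 𝓝 p, β (q y) (q y) = 1) (v : E) :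
    β (q p) (fderiv ℝ q p v) = 0 := by
  have h := fderiv_apply_eq_zero_of_eventuallyEq_const hunit v
  rw [fderiv_bilinear_apply β hq hq, hβ (fderiv ℝ q p v)] at h
  linarith

omit [NormedSpace ℝ E] in
theorem eigenvalue_eventuallyEq_bilin (heig : ∀ᶠ y in 𝓝 p, Γ y (q y) = lam y • q y)
    (hunit : ∀ᶠ y in 𝓝 p, β (q y) (q y) = 1) :
    lam =ᶠ[𝓝 p] fun y => β (q y) (Γ y (q y)) :=
  (heig.and hunit).mono fun _ hy => eq_bilin_of_apply_eq_smul hy.1 hy.2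

theorem fderiv_eigenvalue_apply (hβ : ∀ u w, β u w = β w u)
    (hΓ : DifferentiableAt ℝ Γ p) (hq : DifferentiableAt ℝ q p)
    (hsymm : IsSelfAdjointWrt β (Γ p))
    (heig : ∀ᶠ y in 𝓝 p, Γ y (q y) = lam y • q y) (hunit : ∀ᶠ y in 𝓝 p, β (q y) (q y) = 1)
    (v : E) :
    fderiv ℝ lam p v = β (q p) (fderiv ℝ Γ p v (q p)) := by
  have horth := bilin_fderiv_eq_zero_of_eventually_eq_one hβ hq hunit v
  have h₁ : β (fderiv ℝ q p v) (Γ p (q p)) = 0 := by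
    rw [heig.self_of_nhds, map_smul, hβ, horth, smul_zero]
  have h₂ : β (q p) (Γ p (fderiv ℝ q p v)) = 0 := by
    rw [← hsymm, heig.self_of_nhds, map_smul, _root_.smul_apply, horth, smul_zero]
  rw [(eigenvalue_eventuallyEq_bilin heig hunit).fderiv_eq,
    fderiv_bilinear_apply β hq (by fun_prop), fderiv_clm_apply_apply hΓ hq, map_add, h₁, h₂,
    zero_add, add_zero]

theorem fderiv_eigen_equation_apply (hΓ : DifferentiableAt ℝ Γ p) (hq : DifferentiableAt ℝ q p)
    (hlam : DifferentiableAt ℝ lam p) (heig : ∀ᶠ y in 𝓝 p, Γ y (q y) = lam y • q y) (v : E) :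
    fderiv ℝ Γ p v (q p) + Γ p (fderiv ℝ q p v) =
      fderiv ℝ lam p v • q p + lam p • fderiv ℝ q p v := by
  have h : fderiv ℝ (fun y => Γ y (q y)) p v = fderiv ℝ (fun y => lam y • q y) p v := by
    rw [EventuallyEq.fderiv_eq heig]
  rw [fderiv_clm_apply_apply hΓ hq, fderiv_fun_smul hlam hq] at h
  simpa [add_comm] using h

theorem fderiv_fderiv_eigenvalue_apply (hβ : ∀ u w, β u w = β w u)
    (hΓ : ∀ᶠ y in 𝓝 p, DifferentiableAt ℝ Γ y) (hq : ∀ᶠ y in 𝓝 p, DifferentiableAt ℝ q y)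
    (hsymm : ∀ᶠ y in 𝓝 p, IsSelfAdjointWrt β (Γ y))
    (heig : ∀ᶠ y in 𝓝 p, Γ y (q y) = lam y • q y) (hunit : ∀ᶠ y in 𝓝 p, β (q y) (q y) = 1)
    {v : E} (hΓ' : DifferentiableAt ℝ (fun y => fderiv ℝ Γ y v) p) (w : E) :
    fderiv ℝ (fun y => fderiv ℝ lam y v) p w =
      β (q p) (fderiv ℝ (fun y => fderiv ℝ Γ y v) p w (q p)) +
        2 * β (fderiv ℝ q p w) (lam p • fderiv ℝ q p v - Γ p (fderiv ℝ q p v)) := by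
  have hqp := hq.self_of_nhds
  have hlam : DifferentiableAt ℝ lam p :=
    (eigenvalue_eventuallyEq_bilin heig hunit).differentiableAt_iff.mpr
      (by have := hΓ.self_of_nhds; fun_prop)
  have hDlam : (fun y => fderiv ℝ lam y v) =ᶠ[𝓝 p]
      fun y => β (q y) (fderiv ℝ Γ y v (q y)) := by
    filter_upwards [hΓ, hq, hsymm, heig.eventually_nhds, hunit.eventually_nhds]
      with y hΓy hqy hsymmy heigy hunity
    exact fderiv_eigenvalue_apply hβ hΓy hqy hsymmy heigy hunity v
  have horth : β (fderiv ℝ q p w) (q p) = 0 := by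
    rw [hβ, bilin_fderiv_eq_zero_of_eventually_eq_one hβ hqp hunit w]
  have hswap : β (q p) (fderiv ℝ Γ p v (fderiv ℝ q p w)) =
      β (fderiv ℝ q p w) (fderiv ℝ Γ p v (q p)) := by
    rw [← IsSelfAdjointWrt.fderiv hΓ.self_of_nhds hsymm, hβ]
  have hDΓq : fderiv ℝ Γ p v (q p) =
      fderiv ℝ lam p v • q p + (lam p • fderiv ℝ q p v - Γ p (fderiv ℝ q p v)) := by
    rw [← add_sub_assoc, ← fderiv_eigen_equation_apply hΓ.self_of_nhds hqp hlam heig v,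
      add_sub_cancel_right]
  rw [hDlam.fderiv_eq, fderiv_bilinear_apply β hqp (hΓ'.clm_apply hqp),
    fderiv_clm_apply_apply hΓ' hqp, map_add, hswap, hDΓq, map_add, map_smul, horth, smul_zero,
    zero_add]
  ring

end Eigenvalue

section Christoffel

variable {ι : Type*}

def HasStiffnessSymmetries (c : ι → ι → ι → ι → ℝ) : Prop :=
  ∀ i j k l, c i j k l = c j i k l ∧ c i j k l = c k l i j

theorem HasStiffnessSymmetries.swap_last {c : ι → ι → ι → ι → ℝ}
    (hc : HasStiffnessSymmetries c) (i j k l : ι) : c i j k l = c i j l k := by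
  rw [(hc i j k l).2, (hc k l i j).1, ← (hc i j l k).2]

variable [Fintype ι]

def dotProductCLM : (ι → ℝ) →L[ℝ] (ι → ℝ) →L[ℝ] ℝ :=
  (dotProductBilin ℝ ℝ).toContinuousBilinearMap

@[simp]
theorem dotProductCLM_apply (u w : ι → ℝ) : dotProductCLM u w = u ⬝ᵥ w := rfl

theorem isSelfAdjointWrt_dotProductCLM_toLin' [DecidableEq ι] {A : Matrix ι ι ℝ}
    (hA : Aᵀ = A) :
    IsSelfAdjointWrt dotProductCLM (LinearMap.toContinuousLinearMap (toLin' A)) := by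
  intro u w
  simp [dotProduct_mulVec, ← mulVec_transpose, hA]

def christoffelBilin (c : ι → ι → ι → ι → ℝ) : (ι → ℝ) →ₗ[ℝ] (ι → ℝ) →ₗ[ℝ] Matrix ι ι ℝ :=
  LinearMap.mk₂ ℝ (fun u w => Matrix.of fun i l => ∑ j, ∑ k, c i j k l * u j * w k)
    (fun u u' w => by ext; simp [add_mul, mul_add, Finset.sum_add_distrib])
    (fun r u w => by ext; simp [Finset.mul_sum]; grind)
    (fun u w w' => by ext; simp [mul_add, Finset.sum_add_distrib])
    (fun r u w => by ext; simp [Finset.mul_sum]; grind)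

theorem christoffel_eq_christoffelBilin (a : (Fin 3 → ℝ) → Fin 3 → Fin 3 → Fin 3 → Fin 3 → ℝ)
    (x p : Fin 3 → ℝ) : christoffel a x p = christoffelBilin (a x) p p :=
  rfl

def christoffelCLM [DecidableEq ι] (c : ι → ι → ι → ι → ℝ) :
    (ι → ℝ) →L[ℝ] (ι → ℝ) →L[ℝ] (ι → ℝ) →L[ℝ] (ι → ℝ) :=
  ((christoffelBilin c).compr₂
    (LinearMap.toContinuousLinearMap.toLinearMap ∘ₗ toLin'.toLinearMap)).toContinuousBilinearMap

@[simp]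
theorem christoffelCLM_apply [DecidableEq ι] (c : ι → ι → ι → ι → ℝ) (u w : ι → ℝ) :
    christoffelCLM c u w = LinearMap.toContinuousLinearMap (toLin' (christoffelBilin c u w)) :=
  rfl

variable {c : ι → ι → ι → ι → ℝ}

theorem christoffelBilin_transpose (hc : HasStiffnessSymmetries c) (u w : ι → ℝ) :
    (christoffelBilin c u w)ᵀ = christoffelBilin c w u := by
  ext i l
  simp only [transpose_apply, christoffelBilin, LinearMap.mk₂_apply, of_apply]
  rw [Finset.sum_comm]
  refine Finset.sum_congr rfl fun k _ => Finset.sum_congr rfl fun j _ => ?_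
  rw [(hc l j k i).2, (hc k i l j).1, hc.swap_last i k l j]
  ring

theorem dotProduct_christoffelBilin_single_mulVec [DecidableEq ι] (hc : HasStiffnessSymmetries c)
    (u : ι → ℝ) (j k : ι) :
    u ⬝ᵥ (christoffelBilin c (Pi.single j 1) (Pi.single k 1) *ᵥ u) =
      christoffelBilin c u u j k := by
  simp only [christoffelBilin, LinearMap.mk₂_apply, of_apply, dotProduct, mulVec,
    Pi.single_apply, mul_ite, mul_one, mul_zero, Finset.sum_ite_eq', Finset.mem_univ, if_true,
    Finset.mul_sum]
  refine Finset.sum_congr rfl fun i _ => Finset.sum_congr rfl fun l _ => ?_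
  rw [(hc i j k l).1, hc.swap_last]
  ring

theorem dotProduct_christoffelCLM_single_add_mulVec [DecidableEq ι]
    (hc : HasStiffnessSymmetries c) (u : ι → ℝ) (j k : ι) :
    u ⬝ᵥ ((christoffelCLM c (Pi.single j 1) (Pi.single k 1) +
      christoffelCLM c (Pi.single k 1) (Pi.single j 1)) u) = 2 * christoffelBilin c u u j k := by
  have hsymm : christoffelBilin c u u k j = christoffelBilin c u u j k := by
    simpa using congrFun₂ (christoffelBilin_transpose hc u u) j k
  simp [dotProduct_add, dotProduct_christoffelBilin_single_mulVec hc, hsymm]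
  ring

end Christoffel

theorem hessian_of_eigenvalue_identity_general
    (a : (Fin 3 → ℝ) → Fin 3 → Fin 3 → Fin 3 → Fin 3 → ℝ)
    (hsymm : StiffSymm a)
    (x : Fin 3 → ℝ) (U : Set (Fin 3 → ℝ)) (hU : IsOpen U)
    (lam : (Fin 3 → ℝ) → ℝ) (q : (Fin 3 → ℝ) → Fin 3 → ℝ)
    (hq : ContDiffOn ℝ 2 q U)
    (heig : ∀ p ∈ U, (christoffel a x p).mulVec (q p) = lam p • q p)
    (hunit : ∀ p ∈ U, ∑ i : Fin 3, q p i * q p i = 1) :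
    ∀ p ∈ U,
      (Matrix.of fun j k : Fin 3 =>
          fderiv ℝ (fun y => fderiv ℝ lam y (Pi.single k (1 : ℝ))) p
            (Pi.single j (1 : ℝ))) =
        (2 : ℝ) •
          (christoffel a x (q p) +
            (Matrix.of fun i j : Fin 3 =>
                fderiv ℝ (fun y => q y i) p (Pi.single j (1 : ℝ)))ᵀ *
              (lam p • (1 : Matrix (Fin 3) (Fin 3) ℝ) - christoffel a x p) *
            (Matrix.of fun i j : Fin 3 =>
                fderiv ℝ (fun y => q y i) p (Pi.single j (1 : ℝ)))) := by
  intro p hp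
  have hUp : ∀ᶠ y in 𝓝 p, y ∈ U := hU.mem_nhds hp
  have hqd : ∀ y ∈ U, DifferentiableAt ℝ q y := fun y hy =>
    (hq.differentiableOn two_ne_zero).differentiableAt (hU.mem_nhds hy)
  have hΓsymm : ∀ y, IsSelfAdjointWrt dotProductCLM (christoffelCLM (a x) y y) := fun y => by
    simpa using isSelfAdjointWrt_dotProductCLM_toLin' (christoffelBilin_transpose (hsymm x) y y)
  set D : Matrix (Fin 3) (Fin 3) ℝ := of fun i j => fderiv ℝ (fun y => q y i) p (Pi.single j 1)
  have hcol : ∀ j, Dᵀ j = fderiv ℝ q p (Pi.single j 1) := fun j => by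
    ext i
    simp [D, fderiv_apply (hqd p hp)]
  ext j k
  rw [of_apply, fderiv_fderiv_eigenvalue_apply (β := dotProductCLM)
      (Γ := fun y => christoffelCLM (a x) y y) dotProduct_comm
      (Eventually.of_forall fun y => by fun_prop) (hUp.mono hqd) (Eventually.of_forall hΓsymm)
      (hUp.mono heig) (hUp.mono hunit)
      (by simp_rw [fderiv_bilinear_diag_apply]; fun_prop),
    fderiv_fderiv_bilinear_diag_apply, Matrix.smul_apply, Matrix.add_apply, mul_mul_apply,
    hcol, hcol, dotProductCLM_apply, dotProduct_christoffelCLM_single_add_mulVec (hsymm x)]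
  simp only [christoffelCLM_apply, LinearMap.coe_toContinuousLinearMap', toLin'_apply,
    dotProductCLM_apply, dotProduct_sub, dotProduct_smul, smul_eq_mul,
    christoffel_eq_christoffelBilin, sub_mulVec, smul_mulVec, one_mulVec]
  ring

/-- the Hessian identity (2.10). Fix `x ∈ ℝ³`. If `λ : U → ℝ` and
`q : U → ℝ³` are `C²` on an open set `U ⊆ ℝ³ \ {0}` with `Γ(x,p) q(p) = λ(p) q(p)` and
`⟨q(p), q(p)⟩ = 1` on `U`, then the Hessian matrix of `λ` at `p ∈ U` equals
`2 (Γ(x, q(p)) + (Dq)ᵀ (λ(p) I − Γ(x,p)) Dq)`. -/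
theorem hessian_of_eigenvalue_identity
    (a : (Fin 3 → ℝ) → Fin 3 → Fin 3 → Fin 3 → Fin 3 → ℝ)
    (hsymm : StiffSymm a)
    (x : Fin 3 → ℝ) (U : Set (Fin 3 → ℝ)) (hU : IsOpen U)
    (hU0 : U ⊆ {p : Fin 3 → ℝ | p ≠ 0})
    (lam : (Fin 3 → ℝ) → ℝ) (q : (Fin 3 → ℝ) → Fin 3 → ℝ)
    (hlam : ContDiffOn ℝ 2 lam U) (hq : ContDiffOn ℝ 2 q U)
    (heig : ∀ p ∈ U, (christoffel a x p).mulVec (q p) = lam p • q p)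
    (hunit : ∀ p ∈ U, ∑ i : Fin 3, q p i * q p i = 1) :
    ∀ p ∈ U,
      (Matrix.of fun j k : Fin 3 =>
          fderiv ℝ (fun y => fderiv ℝ lam y (Pi.single k (1 : ℝ))) p
            (Pi.single j (1 : ℝ))) =
        (2 : ℝ) •
          (christoffel a x (q p) +
            (Matrix.of fun i j : Fin 3 =>
                fderiv ℝ (fun y => q y i) p (Pi.single j (1 : ℝ)))ᵀ *
              (lam p • (1 : Matrix (Fin 3) (Fin 3) ℝ) - christoffel a x p) *
            (Matrix.of fun i j : Fin 3 =>
                fderiv ℝ (fun y => q y i) p (Pi.single j (1 : ℝ)))) :=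
  hessian_of_eigenvalue_identity_general a hsymm x U hU lam q hq heig hunit
end
end

section
/- Assume a is C^∞ and that both the positive-definiteness assumption and the gap condition hold. Then for every fixed x ∈ ℝ³ the function p ↦ λ¹(x,p) is C^∞ on ℝ³ \ {0}, and for every p ∈ ℝ³ \ {0} its Hessian at p (the second derivative of p ↦ λ¹(x,p) at p, viewed as a symmetric bilinear form on ℝ³) is positive definite. -/
noncomputable section

open Matrix

/-!
Fix `x` and `p ≠ 0`. By the gap condition, `λ¹(x,p)` is a simple root of the characteristic
polynomial of `Γ(x,p)`, and the Rayleigh bound `u ⬝ Γ u ≤ λ¹` for unit `u` makes `λ¹(x,·)`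
continuous; the implicit function theorem applied to `(q, t) ↦ charpoly Γ(x,q) (t)` then makes
`λ¹(x,·)` smooth near `p`.

For the Hessian, take a unit top eigenvector `u` of `Γ(x,p)`. The symmetries of `a` give
`u ⬝ Γ(x,q) u = q ⬝ Γ(x,u) q`, so by the Rayleigh bound the quadratic form `q ↦ q ⬝ Γ(x,u) q`
lies below `λ¹(x,·)` and touches it at `p`. Hence the Hessian of `λ¹(x,·)` at `p` dominates
`2 Γ(x,u)`, which is positive definite.
-/

open Filter Topology Polynomial
open scoped ContDiff

theorem ContDiffAt.of_implicit {E : Type*} [NormedAddCommGroup E] [NormedSpace ℝ E]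
    [CompleteSpace E] {F : E × ℝ → ℝ} {f : E → ℝ} {p : E} {n : WithTop ℕ∞} {D : ℝ}
    (hF : ContDiffAt ℝ n F (p, f p)) (hn : n ≠ 0)
    (hD : HasDerivAt (fun t => F (p, t)) D (f p)) (hD0 : D ≠ 0)
    (hf : ContinuousAt f p) (hroot : ∀ᶠ q in 𝓝 p, F (q, f q) = F (p, f p)) :
    ContDiffAt ℝ n f p := by
  have hinr : (fderiv ℝ F (p, f p) ∘L .inr ℝ E ℝ) 1 = D := by
    have hline : HasDerivAt (fun t : ℝ => ((p, t) : E × ℝ)) ((0 : E), (1 : ℝ)) (f p) :=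
      (hasDerivAt_const _ p).prodMk (hasDerivAt_id _)
    exact ((hF.differentiableAt hn).hasFDerivAt.comp_hasDerivAt _ hline).unique hD
  have hinv : (fderiv ℝ F (p, f p) ∘L .inr ℝ E ℝ).IsInvertible := by
    refine .of_inverse (g := D⁻¹ • .id ℝ ℝ) ?_ ?_ <;> ext <;> simp [hinr, hD0]
  have hψ := hF.eventually_apply_eq_iff_implicitFunction hn hinv
  have htend : Tendsto (fun q => (q, f q)) (𝓝 p) (𝓝 (p, f p)) := tendsto_id.prodMk_nhds hf
  refine (hF.contDiffAt_implicitFunction hn hinv).congr_of_eventuallyEq ?_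
  filter_upwards [htend.eventually hψ, hroot] with q hq hq'
  exact (hq.mp hq').symm

theorem ContDiff.matrix_det {n : Type*} [Fintype n] [DecidableEq n] {E : Type*}
    [NormedAddCommGroup E] [NormedSpace ℝ E] {k : WithTop ℕ∞} {M : E → Matrix n n ℝ}
    (hM : ∀ i j, ContDiff ℝ k fun z => M z i j) : ContDiff ℝ k fun z => (M z).det := by
  simp only [Matrix.det_apply]
  exact ContDiff.sum fun σ _ => (contDiff_prod fun i _ => hM _ _).const_smul _

namespace Matrix

variable {n : Type*} [Fintype n]

theorem isRoot_charpoly_of_mulVec_eq_smul [DecidableEq n] {A : Matrix n n ℝ} {μ : ℝ}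
    {v : n → ℝ} (hv : v ≠ 0) (hAv : A *ᵥ v = μ • v) : A.charpoly.IsRoot μ := by
  rw [IsRoot.def, eval_charpoly, ← exists_mulVec_eq_zero_iff]
  exact ⟨v, hv, by simp [sub_mulVec, hAv]⟩

theorem dotProduct_mulVec_le_sum_abs {u : n → ℝ} (hu : u ⬝ᵥ u = 1) (M : Matrix n n ℝ) :
    u ⬝ᵥ M *ᵥ u ≤ ∑ i, ∑ j, |M i j| := by
  have hsq : ∀ i, u i ^ 2 ≤ 1 := fun i => by
    rw [← hu, sq, dotProduct]
    exact Finset.single_le_sum (fun j _ => mul_self_nonneg (u j)) (Finset.mem_univ i)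
  simp only [dotProduct, mulVec, Finset.mul_sum]
  refine Finset.sum_le_sum fun i _ => Finset.sum_le_sum fun j _ => ?_
  have hij : |u i * u j| ≤ 1 := by
    rw [← sq_le_one_iff_abs_le_one, mul_pow]
    exact mul_le_one₀ (hsq i) (sq_nonneg _) (hsq j)
  calc u i * (M i j * u j) ≤ |M i j| * |u i * u j| := by
        rw [← abs_mul]; exact (le_abs_self _).trans_eq (by ring_nf)
    _ ≤ |M i j| := mul_le_of_le_one_right (abs_nonneg _) hij

namespace IsHermitian

variable [DecidableEq n] {A : Matrix n n ℝ}

theorem eval_derivative_charpoly (hA : A.IsHermitian) (i : n) :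
    A.charpoly.derivative.eval (hA.eigenvalues i) =
      ∏ j ∈ Finset.univ.erase i, (hA.eigenvalues i - hA.eigenvalues j) := by
  have : A.charpoly = Lagrange.nodal Finset.univ hA.eigenvalues := by
    simp [hA.charpoly_eq, Lagrange.nodal_eq]
  rw [this, Lagrange.eval_nodal_derivative_eval_node_eq (Finset.mem_univ i), Lagrange.eval_nodal]

theorem exists_eigenvalues_eq_of_isRoot (hA : A.IsHermitian) {μ : ℝ}
    (hμ : A.charpoly.IsRoot μ) : ∃ i, hA.eigenvalues i = μ := by
  simpa [hA.roots_charpoly_eq_eigenvalues, eq_comm] using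
    (mem_roots (charpoly_monic A).ne_zero).mpr hμ

theorem dotProduct_eigenvectorBasis_self (hA : A.IsHermitian) (i : n) :
    ⇑(hA.eigenvectorBasis i) ⬝ᵥ ⇑(hA.eigenvectorBasis i) = 1 := by
  have h : inner ℝ (hA.eigenvectorBasis i) (hA.eigenvectorBasis i) = 1 := by
    rw [real_inner_self_eq_norm_sq, hA.eigenvectorBasis.orthonormal.1 i, one_pow]
  simpa only [EuclideanSpace.inner_eq_star_dotProduct, star_trivial] using h

theorem eigenvectorBasis_ne_zero (hA : A.IsHermitian) (i : n) :
    ⇑(hA.eigenvectorBasis i) ≠ 0 := fun h => by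
  simpa [h] using hA.dotProduct_eigenvectorBasis_self i

theorem dotProduct_mulVec_le (hA : A.IsHermitian) {L : ℝ} (hL : ∀ i, hA.eigenvalues i ≤ L)
    (v : n → ℝ) : v ⬝ᵥ A *ᵥ v ≤ L * (v ⬝ᵥ v) := by
  have hB : (L • 1 - A).IsHermitian := (isHermitian_one.smul (IsSelfAdjoint.all L)).sub hA
  have hpsd : (L • 1 - A).PosSemidef := by
    refine hB.posSemidef_iff_eigenvalues_nonneg.mpr fun j => ?_
    -- An eigenvalue `μ` of `L • 1 - A` comes from the eigenvalue `L - μ` of `A`.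
    have hAb : A *ᵥ ⇑(hB.eigenvectorBasis j) =
        (L - hB.eigenvalues j) • ⇑(hB.eigenvectorBasis j) := by
      have := hB.mulVec_eigenvectorBasis j
      rw [sub_mulVec, smul_mulVec, one_mulVec] at this
      rw [sub_smul, ← this]
      abel
    obtain ⟨i, hi⟩ := hA.exists_eigenvalues_eq_of_isRoot
      (isRoot_charpoly_of_mulVec_eq_smul (hB.eigenvectorBasis_ne_zero j) hAb)
    show 0 ≤ hB.eigenvalues j
    linarith [hL i]
  have := hpsd.dotProduct_mulVec_nonneg v
  simp only [star_trivial, sub_mulVec, smul_mulVec, one_mulVec, dotProduct_sub,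
    dotProduct_smul, smul_eq_mul] at this
  linarith

theorem eq_of_eigenvalues_eq_of_finrank_eigenspace_eq_one (hA : A.IsHermitian) {μ : ℝ}
    (hμ : Module.finrank ℝ (Module.End.eigenspace (toLin' A) μ) = 1) {i j : n}
    (hi : hA.eigenvalues i = μ) (hj : hA.eigenvalues j = μ) : i = j := by
  by_contra hij
  let b : Fin 2 → n → ℝ := fun k => ⇑(hA.eigenvectorBasis (![i, j] k))
  have hb : LinearIndependent ℝ b :=
    (hA.eigenvectorBasis.orthonormal.linearIndependent.comp _
      (injective_pair_iff_ne.mpr hij)).map'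
      (WithLp.linearEquiv 2 ℝ (n → ℝ)).toLinearMap (LinearEquiv.ker _)
  have hspan : Submodule.span ℝ (Set.range b) ≤ Module.End.eigenspace (toLin' A) μ := by
    rw [Submodule.span_le]
    rintro _ ⟨k, rfl⟩
    rw [SetLike.mem_coe, Module.End.mem_eigenspace_iff, toLin'_apply,
      hA.mulVec_eigenvectorBasis]
    fin_cases k <;> simp [b, hi, hj]
  have := Submodule.finrank_mono hspan
  rw [finrank_span_eq_card hb, hμ] at this
  simp at this

end IsHermitian

end Matrix

theorem IsLocalMin.deriv_deriv_nonneg {f : ℝ → ℝ} {x₀ : ℝ} (hmin : IsLocalMin f x₀)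
    (hf : ContinuousAt f x₀) : 0 ≤ deriv (deriv f) x₀ := by
  by_contra! hneg
  -- The second-derivative test would make `x₀` a local maximum too, so `f` is locally constant.
  have hmax := isLocalMax_of_deriv_deriv_neg hneg hmin.deriv_eq_zero hf
  have hconst : f =ᶠ[𝓝 x₀] fun _ => f x₀ := by
    filter_upwards [hmin, hmax] with x h₁ h₂ using le_antisymm h₂ h₁
  have : deriv (deriv f) x₀ = 0 := by
    rw [hconst.deriv.deriv_eq]
    simp
  exact hneg.ne this

section SecondDerivative

variable {E : Type*} [NormedAddCommGroup E] [NormedSpace ℝ E] {f g : E → ℝ} {p : E}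

theorem deriv_deriv_comp_line (hf : ContDiffAt ℝ 2 f p) (v : E) :
    deriv (deriv fun s : ℝ => f (p + s • v)) 0 = fderiv ℝ (fderiv ℝ f) p v v := by
  have hline : ∀ s : ℝ, HasDerivAt (fun s : ℝ => p + s • v) v s := fun s => by
    simpa using ((hasDerivAt_id s).smul_const v).const_add p
  have hcont : Tendsto (fun s : ℝ => p + s • v) (𝓝 0) (𝓝 p) := by
    simpa using (hline 0).continuousAt.tendsto
  have hdiff : ∀ᶠ s in 𝓝 (0 : ℝ), DifferentiableAt ℝ f (p + s • v) :=
    hcont.eventually ((hf.eventually (by simp)).mono fun q hq => hq.differentiableAt (by simp))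
  have hderiv :
      deriv (fun s : ℝ => f (p + s • v)) =ᶠ[𝓝 0] fun s => fderiv ℝ f (p + s • v) v := by
    filter_upwards [hdiff] with s hs
    exact (hs.hasFDerivAt.comp_hasDerivAt s (hline s)).deriv
  have hf' : DifferentiableAt ℝ (fderiv ℝ f) p :=
    (hf.fderiv_right (m := 1) (by norm_num)).differentiableAt (by simp)
  rw [hderiv.deriv_eq]
  exact (((ContinuousLinearMap.apply ℝ ℝ v).hasFDerivAt.comp p hf'.hasFDerivAt
    ).comp_hasDerivAt_of_eq 0 (hline 0) (by simp)).deriv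

theorem IsLocalMin.fderiv_fderiv_apply_self_nonneg (hmin : IsLocalMin f p)
    (hf : ContDiffAt ℝ 2 f p) (v : E) : 0 ≤ fderiv ℝ (fderiv ℝ f) p v v := by
  have hline : ContinuousAt (fun s : ℝ => p + s • v) 0 := by fun_prop
  rw [← deriv_deriv_comp_line hf]
  refine IsLocalMin.deriv_deriv_nonneg ?_ (hf.continuousAt.comp_of_eq hline (by simp))
  exact IsLocalMin.comp_continuous (by simpa using hmin) hline

theorem fderiv_fderiv_apply_self_le_of_eventuallyLE (hf : ContDiffAt ℝ 2 f p)
    (hg : ContDiffAt ℝ 2 g p) (hle : g ≤ᶠ[𝓝 p] f) (heq : g p = f p) (v : E) :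
    fderiv ℝ (fderiv ℝ g) p v v ≤ fderiv ℝ (fderiv ℝ f) p v v := by
  have hmin : IsLocalMin (f - g) p := by
    filter_upwards [hle] with q hq
    simpa [heq] using hq
  have hdiff : ∀ {φ : E → ℝ}, ContDiffAt ℝ 2 φ p → ∀ᶠ q in 𝓝 p, DifferentiableAt ℝ φ q :=
    fun hφ => (hφ.eventually (by simp)).mono fun q hq => hq.differentiableAt (by simp)
  have hsub : fderiv ℝ (f - g) =ᶠ[𝓝 p] fderiv ℝ f - fderiv ℝ g := by
    filter_upwards [hdiff hf, hdiff hg] with q hfq hgq using fderiv_sub hfq hgq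
  have h2 := hmin.fderiv_fderiv_apply_self_nonneg (hf.sub hg) v
  rw [hsub.fderiv_eq, fderiv_sub ((hf.fderiv_right (m := 1) (by norm_num)).differentiableAt
    (by simp)) ((hg.fderiv_right (m := 1) (by norm_num)).differentiableAt (by simp))] at h2
  simpa using h2

end SecondDerivative

theorem fderiv_fderiv_dotProduct_mulVec_self {n : Type*} [Fintype n] (M : Matrix n n ℝ)
    (p v : n → ℝ) :
    fderiv ℝ (fderiv ℝ fun q : n → ℝ => q ⬝ᵥ M *ᵥ q) p v v = 2 * (v ⬝ᵥ M *ᵥ v) := by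
  have hQ : ContDiff ℝ 2 fun q : n → ℝ => q ⬝ᵥ M *ᵥ q := by
    simp only [dotProduct, mulVec]
    fun_prop
  rw [← deriv_deriv_comp_line hQ.contDiffAt]
  have hpoly : (fun s : ℝ => (p + s • v) ⬝ᵥ M *ᵥ (p + s • v)) = fun s =>
      p ⬝ᵥ M *ᵥ p + (s * (p ⬝ᵥ M *ᵥ v + v ⬝ᵥ M *ᵥ p) + s ^ 2 * (v ⬝ᵥ M *ᵥ v)) := by
    ext s
    simp only [mulVec_add, mulVec_smul, dotProduct_add, add_dotProduct, dotProduct_smul,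
      smul_dotProduct, smul_eq_mul]
    ring
  have hd : ∀ c₀ c₁ c₂ : ℝ,
      deriv (deriv fun s : ℝ => c₀ + (s * c₁ + s ^ 2 * c₂)) 0 = 2 * c₂ := by
    intro c₀ c₁ c₂
    have h₁ : ∀ s : ℝ,
        HasDerivAt (fun s : ℝ => c₀ + (s * c₁ + s ^ 2 * c₂)) (c₁ + s * (2 * c₂)) s := fun s =>
      (((hasDerivAt_mul_const c₁).add ((hasDerivAt_pow 2 s).mul_const c₂)).const_add
        c₀).congr_deriv (by ring)
    rw [funext fun s => (h₁ s).deriv]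
    exact ((hasDerivAt_mul_const _).const_add _).deriv
  rw [hpoly, hd]

section Christoffel

variable {a : (Fin 3 → ℝ) → Fin 3 → Fin 3 → Fin 3 → Fin 3 → ℝ}

theorem StiffSymm.swap_last (hsymm : StiffSymm a) (x : Fin 3 → ℝ) (i j k l : Fin 3) :
    a x i j k l = a x i j l k := by
  rw [(hsymm x i j k l).2, (hsymm x k l i j).1, (hsymm x l k i j).2]

theorem christoffel_isHermitian (hsymm : StiffSymm a) (x p : Fin 3 → ℝ) :
    (christoffel a x p).IsHermitian := by
  ext l i
  simp only [christoffel, conjTranspose_apply, of_apply, star_trivial]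
  rw [Finset.sum_comm]
  refine Finset.sum_congr rfl fun j _ => Finset.sum_congr rfl fun k _ => ?_
  rw [(hsymm x i k j l).2, (hsymm x j l i k).1, hsymm.swap_last]
  ring

theorem dotProduct_christoffel_mulVec_comm (hsymm : StiffSymm a) (x p v : Fin 3 → ℝ) :
    v ⬝ᵥ christoffel a x p *ᵥ v = p ⬝ᵥ christoffel a x v *ᵥ p := by
  simp only [dotProduct, mulVec, christoffel, of_apply, Finset.mul_sum, Finset.sum_mul,
    ← Fintype.sum_prod_type']
  let σ : Fin 3 × Fin 3 × Fin 3 × Fin 3 ≃ Fin 3 × Fin 3 × Fin 3 × Fin 3 :=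
    ⟨fun t => (t.2.2.1, t.2.2.2, t.1, t.2.1), fun t => (t.2.2.1, t.2.2.2, t.1, t.2.1),
      fun _ => rfl, fun _ => rfl⟩
  refine Fintype.sum_equiv σ _ _ fun ⟨i, l, j, k⟩ => ?_
  simp only [σ, Equiv.coe_fn_mk]
  rw [(hsymm x i j k l).1, hsymm.swap_last]
  ring

theorem eigenvalues_christoffel_le_lam1 (hsymm : StiffSymm a) (hgap : GapCondition a)
    {x p : Fin 3 → ℝ} (hp : p ≠ 0) (i : Fin 3) :
    (christoffel_isHermitian hsymm x p).eigenvalues i ≤ lam1 a x p :=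
  ((hgap x p hp).2.1 _ ⟨_, (christoffel_isHermitian hsymm x p).eigenvectorBasis_ne_zero i,
    (christoffel_isHermitian hsymm x p).mulVec_eigenvectorBasis i⟩).elim le_of_eq le_of_lt

theorem isRoot_charpoly_christoffel_lam1 (hgap : GapCondition a) {x p : Fin 3 → ℝ}
    (hp : p ≠ 0) : (christoffel a x p).charpoly.IsRoot (lam1 a x p) :=
  let ⟨_, hv, hAv⟩ := (hgap x p hp).1
  isRoot_charpoly_of_mulVec_eq_smul hv hAv

theorem exists_eigenvalues_christoffel_eq_lam1 (hsymm : StiffSymm a) (hgap : GapCondition a)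
    {x p : Fin 3 → ℝ} (hp : p ≠ 0) :
    ∃ i, (christoffel_isHermitian hsymm x p).eigenvalues i = lam1 a x p ∧
      ∀ j ≠ i, (christoffel_isHermitian hsymm x p).eigenvalues j < lam1 a x p := by
  have hA := christoffel_isHermitian hsymm x p
  obtain ⟨i, hi⟩ := hA.exists_eigenvalues_eq_of_isRoot (isRoot_charpoly_christoffel_lam1 hgap hp)
  refine ⟨i, hi, fun j hji => (eigenvalues_christoffel_le_lam1 hsymm hgap hp j).lt_of_ne ?_⟩
  exact fun hj => hji (hA.eq_of_eigenvalues_eq_of_finrank_eigenspace_eq_one (hgap x p hp).2.2 hj hi)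

theorem dotProduct_christoffel_mulVec_le_lam1 (hsymm : StiffSymm a) (hgap : GapCondition a)
    {x p u : Fin 3 → ℝ} (hp : p ≠ 0) (hu : u ⬝ᵥ u = 1) :
    u ⬝ᵥ christoffel a x p *ᵥ u ≤ lam1 a x p := by
  simpa [hu] using (christoffel_isHermitian hsymm x p).dotProduct_mulVec_le
    (eigenvalues_christoffel_le_lam1 hsymm hgap hp) u

theorem exists_dotProduct_christoffel_mulVec_eq_lam1 (hsymm : StiffSymm a)
    (hgap : GapCondition a) {x p : Fin 3 → ℝ} (hp : p ≠ 0) :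
    ∃ u, u ⬝ᵥ u = 1 ∧ u ⬝ᵥ christoffel a x p *ᵥ u = lam1 a x p := by
  have hA := christoffel_isHermitian hsymm x p
  obtain ⟨i, hi, -⟩ := exists_eigenvalues_christoffel_eq_lam1 hsymm hgap hp
  refine ⟨_, hA.dotProduct_eigenvectorBasis_self i, ?_⟩
  rw [hA.mulVec_eigenvectorBasis, dotProduct_smul, hA.dotProduct_eigenvectorBasis_self, hi,
    smul_eq_mul, mul_one]

theorem lam1_sub_le (hsymm : StiffSymm a) (hgap : GapCondition a) {x p q : Fin 3 → ℝ}
    (hp : p ≠ 0) (hq : q ≠ 0) :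
    lam1 a x q - lam1 a x p ≤ ∑ i, ∑ j, |christoffel a x q i j - christoffel a x p i j| := by
  obtain ⟨u, hu, hq'⟩ := exists_dotProduct_christoffel_mulVec_eq_lam1 hsymm hgap (x := x) hq
  have hp' := dotProduct_christoffel_mulVec_le_lam1 hsymm hgap (x := x) hp hu
  have := dotProduct_mulVec_le_sum_abs hu (christoffel a x q - christoffel a x p)
  simp only [sub_mulVec, dotProduct_sub, Matrix.sub_apply] at this
  linarith

theorem continuousAt_lam1 (hsymm : StiffSymm a) (hgap : GapCondition a) {x p : Fin 3 → ℝ}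
    (hp : p ≠ 0) : ContinuousAt (lam1 a x) p := by
  have hΓ : Continuous fun q => ∑ i, ∑ j, |christoffel a x q i j - christoffel a x p i j| := by
    simp only [christoffel, of_apply]
    fun_prop
  rw [ContinuousAt, tendsto_iff_dist_tendsto_zero]
  refine squeeze_zero' (.of_forall fun _ => dist_nonneg) ?_ (by simpa using hΓ.tendsto p)
  filter_upwards [isOpen_ne.mem_nhds hp] with q hq
  rw [Real.dist_eq, abs_sub_le_iff]
  refine ⟨lam1_sub_le hsymm hgap hp hq, (lam1_sub_le hsymm hgap hq hp).trans_eq ?_⟩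
  simp only [abs_sub_comm]

theorem contDiff_eval_charpoly_christoffel (x : Fin 3 → ℝ) :
    ContDiff ℝ ∞ fun z : (Fin 3 → ℝ) × ℝ => (christoffel a x z.1).charpoly.eval z.2 := by
  simp only [eval_charpoly]
  refine ContDiff.matrix_det fun i j => ?_
  by_cases hij : i = j <;>
  · simp only [christoffel, Matrix.sub_apply, scalar_apply, diagonal_apply, of_apply, hij,
      if_true, if_false]
    fun_prop

theorem contDiffAt_lam1 (hsymm : StiffSymm a) (hgap : GapCondition a) {x p : Fin 3 → ℝ}
    (hp : p ≠ 0) : ContDiffAt ℝ ∞ (lam1 a x) p := by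
  have hA := christoffel_isHermitian hsymm x p
  obtain ⟨i, hi, hlt⟩ := exists_eigenvalues_christoffel_eq_lam1 hsymm hgap hp
  have hD : HasDerivAt (fun t => (christoffel a x p).charpoly.eval t)
      (∏ j ∈ Finset.univ.erase i, (lam1 a x p - hA.eigenvalues j)) (lam1 a x p) := by
    have := (christoffel a x p).charpoly.hasDerivAt (hA.eigenvalues i)
    rwa [hA.eval_derivative_charpoly, hi] at this
  have hD0 : 0 < ∏ j ∈ Finset.univ.erase i, (lam1 a x p - hA.eigenvalues j) :=
    Finset.prod_pos fun j hj => sub_pos.mpr (hlt j (Finset.ne_of_mem_erase hj))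
  refine (contDiff_eval_charpoly_christoffel x).contDiffAt.of_implicit (by simp) hD hD0.ne'
    (continuousAt_lam1 hsymm hgap hp) ?_
  filter_upwards [isOpen_ne.mem_nhds hp] with q hq
  rw [(isRoot_charpoly_christoffel_lam1 hgap hq).eq_zero,
    (isRoot_charpoly_christoffel_lam1 hgap hp).eq_zero]

theorem fderiv_fderiv_lam1_apply_self_pos (hsymm : StiffSymm a) (hpos : ChristoffelPosDef a)
    (hgap : GapCondition a) {x p v : Fin 3 → ℝ} (hp : p ≠ 0) (hv : v ≠ 0) :
    0 < fderiv ℝ (fderiv ℝ (lam1 a x)) p v v := by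
  obtain ⟨u, hu, hpu⟩ := exists_dotProduct_christoffel_mulVec_eq_lam1 hsymm hgap (x := x) hp
  have hu0 : u ≠ 0 := by rintro rfl; simp at hu
  have hQ : ContDiff ℝ 2 fun q : Fin 3 → ℝ => q ⬝ᵥ christoffel a x u *ᵥ q := by
    simp only [dotProduct, mulVec]
    fun_prop
  have hle : (fun q => q ⬝ᵥ christoffel a x u *ᵥ q) ≤ᶠ[𝓝 p] lam1 a x := by
    filter_upwards [isOpen_ne.mem_nhds hp] with q hq
    rw [← dotProduct_christoffel_mulVec_comm hsymm]
    exact dotProduct_christoffel_mulVec_le_lam1 hsymm hgap hq hu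
  have hD2 := fderiv_fderiv_apply_self_le_of_eventuallyLE
    ((contDiffAt_lam1 hsymm hgap hp).of_le ENat.LEInfty.out) hQ.contDiffAt hle
    (by rw [← dotProduct_christoffel_mulVec_comm hsymm, hpu]) v
  rw [fderiv_fderiv_dotProduct_mulVec_self] at hD2
  have := (hpos x u hu0).dotProduct_mulVec_pos hv
  simp only [star_trivial] at this
  linarith

end Christoffel

theorem lam1_fiberwise_smooth_and_hessian_posDef_general
    (a : (Fin 3 → ℝ) → Fin 3 → Fin 3 → Fin 3 → Fin 3 → ℝ)
    (hsymm : StiffSymm a)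
    (hpos : ChristoffelPosDef a) (hgap : GapCondition a) :
    ∀ x : Fin 3 → ℝ,
      ContDiffOn ℝ (⊤ : ℕ∞) (fun p : Fin 3 → ℝ => lam1 a x p)
        {p : Fin 3 → ℝ | p ≠ 0} ∧
      ∀ p : Fin 3 → ℝ, p ≠ 0 →
        (∀ v w : Fin 3 → ℝ,
            fderiv ℝ (fderiv ℝ fun p' => lam1 a x p') p v w =
              fderiv ℝ (fderiv ℝ fun p' => lam1 a x p') p w v) ∧
        (∀ v : Fin 3 → ℝ, v ≠ 0 →
            0 < fderiv ℝ (fderiv ℝ fun p' => lam1 a x p') p v v) := by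
  intro x
  refine ⟨fun p hp => (contDiffAt_lam1 hsymm hgap hp).contDiffWithinAt, fun p hp => ⟨?_, ?_⟩⟩
  · exact (contDiffAt_lam1 hsymm hgap hp).isSymmSndFDerivAt (by simpa using ENat.LEInfty.out)
  · exact fun v hv => fderiv_fderiv_lam1_apply_self_pos hsymm hpos hgap hp hv

/-- Under smoothness, positive definiteness and the gap condition, for
every fixed `x ∈ ℝ³` the function `p ↦ λ¹(x,p)` is `C^∞` on `ℝ³ \ {0}` and its Hessian at
every `p ≠ 0`, viewed as a symmetric bilinear form, is positive definite. -/
theorem lam1_fiberwise_smooth_and_hessian_posDef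
    (a : (Fin 3 → ℝ) → Fin 3 → Fin 3 → Fin 3 → Fin 3 → ℝ)
    (hsymm : StiffSymm a) (hsmooth : StiffSmooth a)
    (hpos : ChristoffelPosDef a) (hgap : GapCondition a) :
    ∀ x : Fin 3 → ℝ,
      ContDiffOn ℝ (⊤ : ℕ∞) (fun p : Fin 3 → ℝ => lam1 a x p)
        {p : Fin 3 → ℝ | p ≠ 0} ∧
      ∀ p : Fin 3 → ℝ, p ≠ 0 →
        (∀ v w : Fin 3 → ℝ,
            fderiv ℝ (fderiv ℝ fun p' => lam1 a x p') p v w =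
              fderiv ℝ (fderiv ℝ fun p' => lam1 a x p') p w v) ∧
        (∀ v : Fin 3 → ℝ, v ≠ 0 →
            0 < fderiv ℝ (fderiv ℝ fun p' => lam1 a x p') p v v) :=
  lam1_fiberwise_smooth_and_hessian_posDef_general a hsymm hpos hgap

end
end
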